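/- arXiv:2511.23130 — 8 statements merged into one kernel-verified Lean document; each statement's English description precedes it below -/
import Mathlib

section
/- Consider sequences of complex vector spaces (X_n)_{n∈ℕ}, (Y_n)_{n∈ℕ}, (Z_n)_{n∈ℕ} together with linear maps ρ_n : X_{n+1} → X_n, σ_n : Y_{n+1} → Y_n, τ_n : Z_{n+1} → Z_n, and linear maps f_n : X_n → Y_n, g_n : Y_n → Z_n such that for every n: f_n is injective, g_n is surjective, the range of f_n equals the kernel of g_n, and the squares commute, i.e. f_n ∘ ρ_n = σ_n ∘ f_{n+1} and g_n ∘ σ_n = τ_n ∘ g_{n+1}. Assume that the first derived projective limit of (X_n) vanishes, i.e. the linear map Π_n X_n → Π_n X_n, (x_n)_{n} ↦ (x_n − ρ_n(x_{n+1}))_{n}, is surjective. Define f : Proj X → Proj Y by f((x_n)) = (f_n(x_n)) and g : Proj Y → Proj Z by g((y_n)) = (g_n(y_n)). Then f is injective, the range of f equals the kernel of g, and g is surjective; that is, 0 → Proj X → Proj Y → Proj Z → 0 is an exact sequence of vector spaces. -/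
/-- **Exactness of projective limits when `Proj¹ X = 0`.**
Given a commutative diagram of exact sequences of complex vector spaces
`0 → X_n → Y_n → Z_n → 0` compatible with spectral maps `ρ, σ, τ`, and assuming the first
derived projective limit of `(X_n)` vanishes (i.e. `(x_n) ↦ (x_n - ρ_n (x_{n+1}))` is
surjective), the induced sequence `0 → Proj X → Proj Y → Proj Z → 0` is exact. -/
theorem proj_lim_exact_of_proj1_vanishes
    (X Y Z : ℕ → Type*)
    [∀ n, AddCommGroup (X n)] [∀ n, Module ℂ (X n)]
    [∀ n, AddCommGroup (Y n)] [∀ n, Module ℂ (Y n)]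
    [∀ n, AddCommGroup (Z n)] [∀ n, Module ℂ (Z n)]
    (ρ : ∀ n, X (n + 1) →ₗ[ℂ] X n) (σ : ∀ n, Y (n + 1) →ₗ[ℂ] Y n)
    (τ : ∀ n, Z (n + 1) →ₗ[ℂ] Z n)
    (f : ∀ n, X n →ₗ[ℂ] Y n) (g : ∀ n, Y n →ₗ[ℂ] Z n)
    (hf_inj : ∀ n, Function.Injective (f n))
    (hg_surj : ∀ n, Function.Surjective (g n))
    (h_exact : ∀ n, LinearMap.range (f n) = LinearMap.ker (g n))
    (h_comm_f : ∀ n (x : X (n + 1)), f n (ρ n x) = σ n (f (n + 1) x))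
    (h_comm_g : ∀ n (y : Y (n + 1)), g n (σ n y) = τ n (g (n + 1) y))
    (h_proj1 : ∀ u : ∀ n, X n, ∃ x : ∀ n, X n, ∀ n, x n - ρ n (x (n + 1)) = u n) :
    -- `f` is injective on `Proj X`
    (∀ x x' : ∀ n, X n, (∀ n, ρ n (x (n + 1)) = x n) → (∀ n, ρ n (x' (n + 1)) = x' n) →
        (∀ n, f n (x n) = f n (x' n)) → x = x')
    -- the range of `f` equals the kernel of `g` in `Proj Y`
    ∧ (∀ y : ∀ n, Y n, (∀ n, σ n (y (n + 1)) = y n) →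
        ((∀ n, g n (y n) = 0) ↔
          ∃ x : ∀ n, X n, (∀ n, ρ n (x (n + 1)) = x n) ∧ ∀ n, f n (x n) = y n))
    -- `g : Proj Y → Proj Z` is surjective
    ∧ (∀ z : ∀ n, Z n, (∀ n, τ n (z (n + 1)) = z n) →
        ∃ y : ∀ n, Y n, (∀ n, σ n (y (n + 1)) = y n) ∧ ∀ n, g n (y n) = z n) := by
  refine ⟨?_, ?_, ?_⟩
  · intro x x' _ _ h
    funext n
    exact hf_inj n (h n)
  · intro y hy
    constructor
    · intro hgy
      have hmem : ∀ n, ∃ x, f n x = y n := by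
        intro n
        have : y n ∈ LinearMap.ker (g n) := hgy n
        rw [← h_exact n] at this
        exact this
      choose x hx using hmem
      refine ⟨x, ?_, hx⟩
      intro n
      apply hf_inj n
      rw [h_comm_f n, hx (n + 1), hy n, hx n]
    · rintro ⟨x, -, hx⟩
      intro n
      have : f n (x n) ∈ LinearMap.ker (g n) := by
        rw [← h_exact n]; exact ⟨x n, rfl⟩
      rw [← hx n]
      exact this
  · intro z hz
    choose w hw using fun n => hg_surj n (z n)
    have hker : ∀ n, ∃ u, f n u = σ n (w (n + 1)) - w n := by
      intro n
      have : σ n (w (n + 1)) - w n ∈ LinearMap.ker (g n) := by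
        simp only [LinearMap.mem_ker, map_sub, h_comm_g n, hw, hz n, sub_self]
      rw [← h_exact n] at this
      exact this
    choose u hu using hker
    obtain ⟨x, hx⟩ := h_proj1 u
    refine ⟨fun n => w n + f n (x n), ?_, ?_⟩
    · intro n
      have hxn : x n = u n + ρ n (x (n + 1)) := sub_eq_iff_eq_add.mp (hx n)
      show σ n (w (n + 1) + f (n + 1) (x (n + 1))) = w n + f n (x n)
      rw [map_add, ← h_comm_f n, hxn, map_add, hu n]
      abel
    · intro n
      have : g n (f n (x n)) = 0 := by
        have : f n (x n) ∈ LinearMap.ker (g n) := by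
          rw [← h_exact n]; exact ⟨x n, rfl⟩
        exact this
      rw [map_add, this, add_zero, hw n]
end

section
/- Let I be an index set and let v be a weight matrix on I such that for every n ∈ ℕ the family (v_{n,i}/v_{n+1,i})_{i∈I} vanishes at infinity. For n ∈ ℕ and i ∈ I define α_{n,i} = √(max{1, log(v_{n+1,i}/v_{n,i})}). Then for every n ∈ ℕ: (a) α_{n,i} ≥ 1 for all i ∈ I and the family (1/α_{n,i})_{i∈I} vanishes at infinity; (b) for every N ∈ ℕ there exists c > 0 such that c·v_{n,i} ≤ v_{n+1,i}·e^{−N·α_{n,i}} ≤ v_{n+1,i} for all i ∈ I. -/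
/-- A family of real numbers indexed by `I` vanishes at infinity if outside of suitable
finite sets its members become arbitrarily small in absolute value. -/
def VanishesAtInfinity {I : Type*} (c : I → ℝ) : Prop :=
  ∀ ε > (0 : ℝ), ∃ F : Finset I, ∀ i ∉ F, |c i| < ε

/-- Let `v` be a weight matrix on an index set `I` such that `(v_{n,i}/v_{n+1,i})_i` vanishes
at infinity for every `n`. Set `α_{n,i} = √(max{1, log(v_{n+1,i}/v_{n,i})})`. Then for each
`n`: (a) `α_{n,i} ≥ 1` and `(1/α_{n,i})_i` vanishes at infinity; (b) for every `N ∈ ℕ` there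
is `c > 0` with `c·v_{n,i} ≤ v_{n+1,i}·e^{-N·α_{n,i}} ≤ v_{n+1,i}` for all `i`. -/
theorem weight_matrix_interpolation
    {I : Type*} [Countable I] [Infinite I]
    (v : ℕ → I → ℝ)
    (hv_pos : ∀ n i, 0 < v n i)
    (hv_mono : ∀ n i, v n i ≤ v (n + 1) i)
    (hvan : ∀ n, VanishesAtInfinity fun i => v n i / v (n + 1) i)
    (α : ℕ → I → ℝ)
    (hα : ∀ n i, α n i = Real.sqrt (max 1 (Real.log (v (n + 1) i / v n i)))) :
    ∀ n, (∀ i, 1 ≤ α n i) ∧ VanishesAtInfinity (fun i => 1 / α n i) ∧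
      ∀ N : ℕ, ∃ c > (0 : ℝ), ∀ i,
        c * v n i ≤ v (n + 1) i * Real.exp (-(N : ℝ) * α n i) ∧
        v (n + 1) i * Real.exp (-(N : ℝ) * α n i) ≤ v (n + 1) i := by
  intro n
  have hL0 : ∀ i, 0 ≤ Real.log (v (n + 1) i / v n i) := by
    intro i
    apply Real.log_nonneg
    rw [le_div_iff₀ (hv_pos n i)]
    simpa using hv_mono n i
  have hα1 : ∀ i, 1 ≤ α n i := by
    intro i
    rw [hα n i]
    have : (1 : ℝ) ≤ max 1 (Real.log (v (n + 1) i / v n i)) := le_max_left _ _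
    calc (1 : ℝ) = Real.sqrt 1 := (Real.sqrt_one).symm
    _ ≤ _ := Real.sqrt_le_sqrt this
  have hαpos : ∀ i, 0 < α n i := fun i => lt_of_lt_of_le one_pos (hα1 i)
  refine ⟨hα1, ?_, ?_⟩
  · -- vanishes at infinity
    intro ε hε
    obtain ⟨F, hF⟩ := hvan n (Real.exp (-((1 / ε) ^ 2 + 1))) (Real.exp_pos _)
    refine ⟨F, fun i hi => ?_⟩
    have h1 := hF i hi
    simp only at h1
    have hpos : 0 < v n i / v (n + 1) i := div_pos (hv_pos n i) (hv_pos (n + 1) i)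
    have habs : v n i / v (n + 1) i < Real.exp (-((1 / ε) ^ 2 + 1)) := by
      rwa [abs_of_pos hpos] at h1
    have hlog : Real.log (v n i / v (n + 1) i) < -((1 / ε) ^ 2 + 1) := by
      have := Real.log_lt_log hpos habs
      rwa [Real.log_exp] at this
    have hlog2 : (1 / ε) ^ 2 + 1 < Real.log (v (n + 1) i / v n i) := by
      have : Real.log (v n i / v (n + 1) i) = - Real.log (v (n + 1) i / v n i) := by
        rw [← Real.log_inv, inv_div]
      linarith [hlog, this ▸ hlog]
    have hL : (1 / ε) ^ 2 < max 1 (Real.log (v (n + 1) i / v n i)) :=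
      lt_of_lt_of_le (by linarith) (le_max_right _ _)
    have hsq : 1 / ε < α n i := by
      rw [hα n i]
      exact (Real.lt_sqrt (by positivity)).mpr hL
    have : 1 / α n i < ε := by
      rw [div_lt_iff₀ (hαpos i)]
      rw [div_lt_iff₀ hε] at hsq
      linarith [mul_comm ε (α n i) ▸ hsq]
    show |1 / α n i| < ε
    rw [abs_of_pos (div_pos one_pos (hαpos i))]
    exact this
  · intro N
    refine ⟨Real.exp (-((N : ℝ) * (N + 1))), Real.exp_pos _, fun i => ?_⟩
    set L := Real.log (v (n + 1) i / v n i) with hLdef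
    have hr1 : (1 : ℝ) ≤ v (n + 1) i / v n i := by
      rw [le_div_iff₀ (hv_pos n i)]; simpa using hv_mono n i
    have hrexp : v (n + 1) i / v n i = Real.exp L := by
      rw [hLdef, Real.exp_log (by positivity)]
    have hαsq : α n i ^ 2 = max 1 L := by
      rw [hα n i, Real.sq_sqrt (le_trans zero_le_one (le_max_left _ _))]
    constructor
    · -- c * v n i ≤ v (n+1) i * exp(-N α)
      have key : (N : ℝ) * α n i ≤ L + (N : ℝ) * (N + 1) := by
        by_cases h : α n i ≤ (N : ℝ) + 1
        · nlinarith [hL0 i, Nat.cast_nonneg (α := ℝ) N, hαpos i]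
        · push_neg at h
          have hM : max 1 L = L := by
            rcases max_choice 1 L with hc | hc
            · exfalso; nlinarith [hαsq, Nat.cast_nonneg (α := ℝ) N]
            · exact hc
          have : α n i ^ 2 = L := by rw [hαsq, hM]
          nlinarith [Nat.cast_nonneg (α := ℝ) N]
      have h2 : Real.exp (-((N : ℝ) * (N + 1))) ≤ Real.exp L * Real.exp (-(N : ℝ) * α n i) := by
        rw [← Real.exp_add]
        exact Real.exp_le_exp.mpr (by linarith)
      calc Real.exp (-((N : ℝ) * (N + 1))) * v n i
          ≤ (Real.exp L * Real.exp (-(N : ℝ) * α n i)) * v n i := by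
            exact mul_le_mul_of_nonneg_right h2 (le_of_lt (hv_pos n i))
        _ = (v (n + 1) i / v n i) * v n i * Real.exp (-(N : ℝ) * α n i) := by
            rw [hrexp]; ring
        _ = v (n + 1) i * Real.exp (-(N : ℝ) * α n i) := by
            rw [div_mul_cancel₀ _ (ne_of_gt (hv_pos n i))]
    · -- exp(-Nα) ≤ 1
      have : Real.exp (-(N : ℝ) * α n i) ≤ 1 := by
        rw [Real.exp_le_one_iff]
        have := hαpos i
        have hN : (0 : ℝ) ≤ N := Nat.cast_nonneg N
        nlinarith
      nlinarith [hv_pos (n + 1) i, this, Real.exp_pos (-(N : ℝ) * α n i)]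
end

section
/- Let I and J be index sets, let w be a weight matrix on J satisfying (S), let (α_i)_{i∈I} be real numbers with α_i ≥ 1 such that (1/α_i)_{i∈I} vanishes at infinity, and let (v_i)_{i∈I} be positive real numbers. Define b_{N,(i,j)} = w_{N,j}·e^{N·α_i}/v_i for N ∈ ℕ and (i,j) ∈ I×J. Then b = (b_N)_{N∈ℕ} is a weight matrix on the index set I×J and b satisfies (S). -/
/-- A weight matrix `a` (positive, nondecreasing in `n`) satisfies condition (S) if for every
`n` there is `m ≥ n` such that `(a_{n,i}/a_{m,i})_i` vanishes at infinity. -/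
def SatisfiesS {I : Type*} (a : ℕ → I → ℝ) : Prop :=
  ∀ n : ℕ, ∃ m ≥ n, VanishesAtInfinity fun i => a n i / a m i

/-- Let `w` be a weight matrix on `J` satisfying (S), `(α_i)_{i∈I}` with `α_i ≥ 1` and
`(1/α_i)` vanishing at infinity, and `(v_i)` positive. Then
`b_{N,(i,j)} = w_{N,j}·e^{N·α_i}/v_i` is a weight matrix on `I × J` satisfying (S). -/
theorem weight_matrix_S
    {I J : Type*} [Countable I] [Infinite I] [Countable J] [Infinite J]
    (w : ℕ → J → ℝ)
    (hw_pos : ∀ N j, 0 < w N j)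
    (hw_mono : ∀ N j, w N j ≤ w (N + 1) j)
    (hwS : SatisfiesS w)
    (α : I → ℝ) (hα : ∀ i, 1 ≤ α i) (hαvan : VanishesAtInfinity fun i => 1 / α i)
    (v : I → ℝ) (hv : ∀ i, 0 < v i)
    (b : ℕ → I × J → ℝ)
    (hb : ∀ N p, b N p = w N p.2 * Real.exp ((N : ℝ) * α p.1) / v p.1) :
    (∀ N p, 0 < b N p) ∧ (∀ N p, b N p ≤ b (N + 1) p) ∧ SatisfiesS b := by
  have hmono : ∀ j, Monotone fun N => w N j :=
    fun j => monotone_nat_of_le_succ (fun N => hw_mono N j)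
  have hαpos : ∀ i, 0 < α i := fun i => lt_of_lt_of_le one_pos (hα i)
  refine ⟨?_, ?_, ?_⟩
  · intro N p
    rw [hb]
    exact div_pos (mul_pos (hw_pos N p.2) (Real.exp_pos _)) (hv p.1)
  · intro N p
    rw [hb, hb]
    gcongr
    all_goals first
      | exact (hv p.1).le
      | exact (hw_pos _ _).le
      | exact hw_mono N p.2
      | exact (hαpos p.1).le
      | exact Nat.le_succ N
  · intro n
    obtain ⟨m₀, hm₀, hvan⟩ := hwS n
    refine ⟨max m₀ (n + 1), le_trans (Nat.le_succ n) (le_max_right _ _), ?_⟩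
    set m := max m₀ (n + 1) with hm
    intro ε hε
    obtain ⟨FJ, hFJ⟩ := hvan ε hε
    set M : ℝ := max 1 (Real.log (1 / ε)) with hM
    have hM1 : (0:ℝ) < M + 1 := by positivity
    have hδ : (0:ℝ) < 1 / (M + 1) := by positivity
    obtain ⟨FI, hFI⟩ := hαvan (1 / (M + 1)) hδ
    refine ⟨FI ×ˢ FJ, ?_⟩
    intro p hp
    have hnm : (n : ℝ) ≤ (m : ℝ) := by
      exact_mod_cast le_trans (Nat.le_succ n) (le_max_right _ _)
    have key : b n p / b m p = (w n p.2 / w m p.2) * Real.exp (((n : ℝ) - m) * α p.1) := by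
      rw [hb, hb, sub_mul, Real.exp_sub]
      field_simp
      rw [mul_comm (v p.1), mul_div_mul_right _ _ (hv p.1).ne']
    have hf1pos : 0 < w n p.2 / w m p.2 := div_pos (hw_pos _ _) (hw_pos _ _)
    have hf1le : w n p.2 / w m p.2 ≤ 1 := by
      rw [div_le_one (hw_pos _ _)]
      exact hmono p.2 (le_trans (Nat.le_succ n) (le_max_right _ _))
    have hf2pos : (0:ℝ) < Real.exp (((n : ℝ) - m) * α p.1) := Real.exp_pos _
    have hf2le : Real.exp (((n : ℝ) - m) * α p.1) ≤ 1 := by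
      apply Real.exp_le_one_iff.mpr
      apply mul_nonpos_of_nonpos_of_nonneg (by linarith) (hαpos p.1).le
    have habs : |b n p / b m p| = b n p / b m p := by
      rw [abs_of_pos]; rw [key]; positivity
    rw [habs, key]
    rw [Finset.mem_product, not_and_or] at hp
    rcases hp with hpi | hpj
    · -- i outside FI : exp factor small
      have h1 := hFI p.1 hpi
      simp only [abs_of_pos (one_div_pos.mpr (hαpos p.1))] at h1
      have hαbig : M + 1 < α p.1 := by
        rw [div_lt_div_iff₀ (hαpos p.1) hM1] at h1
        linarith
      have hexp : Real.exp (((n : ℝ) - m) * α p.1) < ε := by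
        have hnm1 : (n : ℝ) - m ≤ -1 := by
          have : (n : ℝ) + 1 ≤ m := by exact_mod_cast le_max_right m₀ (n + 1)
          linarith
        have h2 : ((n : ℝ) - m) * α p.1 ≤ -α p.1 := by
          have := mul_le_mul_of_nonneg_right hnm1 (hαpos p.1).le
          linarith [this]
        have h3 : Real.exp (((n : ℝ) - m) * α p.1) ≤ Real.exp (-α p.1) :=
          Real.exp_le_exp.mpr h2
        have h4 : Real.exp (-α p.1) < Real.exp (-Real.log (1 / ε)) := by
          apply Real.exp_lt_exp.mpr
          have : Real.log (1 / ε) ≤ M := le_max_right _ _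
          linarith
        have h5 : Real.exp (-Real.log (1 / ε)) = ε := by
          rw [Real.exp_neg, Real.exp_log (by positivity), one_div, inv_inv]
        linarith
      calc w n p.2 / w m p.2 * Real.exp (((n : ℝ) - m) * α p.1)
          ≤ 1 * Real.exp (((n : ℝ) - m) * α p.1) :=
            mul_le_mul_of_nonneg_right hf1le hf2pos.le
        _ < ε := by rwa [one_mul]
    · -- j outside FJ : w factor small
      have h1 := hFJ p.2 hpj
      have hpos0 : 0 < w n p.2 / w m₀ p.2 := div_pos (hw_pos _ _) (hw_pos _ _)
      rw [abs_of_pos hpos0] at h1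
      have hle : w n p.2 / w m p.2 ≤ w n p.2 / w m₀ p.2 := by
        apply div_le_div_of_nonneg_left (hw_pos _ _).le (hw_pos _ _)
        exact hmono p.2 (le_max_left _ _)
      calc w n p.2 / w m p.2 * Real.exp (((n : ℝ) - m) * α p.1)
          ≤ w n p.2 / w m p.2 * 1 := mul_le_mul_of_nonneg_left hf2le hf1pos.le
        _ = w n p.2 / w m p.2 := mul_one _
        _ ≤ w n p.2 / w m₀ p.2 := hle
        _ < ε := h1
end

section
/- Let I and J be index sets, let w be a weight matrix on J satisfying (DN), let (α_i)_{i∈I} be real numbers with α_i ≥ 1, and let (v_i)_{i∈I} be positive real numbers. Define b_{N,(i,j)} = w_{N,j}·e^{N·α_i}/v_i for N ∈ ℕ and (i,j) ∈ I×J. Then b = (b_N)_{N∈ℕ} is a weight matrix on the index set I×J and b satisfies (DN). -/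
/-- A weight matrix `a` satisfies condition (DN) if
`∃n ∀m≥n ∀θ∈(0,1) ∃k≥m ∃C>0 ∀i : a_{m,i} ≤ C·a_{k,i}^θ·a_{n,i}^{1−θ}`. -/
def SatisfiesDN {I : Type*} (a : ℕ → I → ℝ) : Prop :=
  ∃ n : ℕ, ∀ m ≥ n, ∀ θ : ℝ, 0 < θ → θ < 1 →
    ∃ k ≥ m, ∃ C > (0 : ℝ), ∀ i, a m i ≤ C * a k i ^ θ * a n i ^ (1 - θ)

/-- Let `w` be a weight matrix on `J` satisfying (DN), `(α_i)_{i∈I}` with `α_i ≥ 1`, and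
`(v_i)` positive. Then `b_{N,(i,j)} = w_{N,j}·e^{N·α_i}/v_i` is a weight matrix on `I × J`
satisfying (DN). -/
theorem weight_matrix_DN
    {I J : Type*} [Countable I] [Infinite I] [Countable J] [Infinite J]
    (w : ℕ → J → ℝ)
    (hw_pos : ∀ N j, 0 < w N j)
    (hw_mono : ∀ N j, w N j ≤ w (N + 1) j)
    (hwDN : SatisfiesDN w)
    (α : I → ℝ) (hα : ∀ i, 1 ≤ α i)
    (v : I → ℝ) (hv : ∀ i, 0 < v i)
    (b : ℕ → I × J → ℝ)
    (hb : ∀ N p, b N p = w N p.2 * Real.exp ((N : ℝ) * α p.1) / v p.1) :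
    (∀ N p, 0 < b N p) ∧ (∀ N p, b N p ≤ b (N + 1) p) ∧ SatisfiesDN b := by
  have hwm : ∀ j, Monotone (fun N => w N j) := fun j =>
    monotone_nat_of_le_succ (fun N => hw_mono N j)
  have hαpos : ∀ i, 0 < α i := fun i => lt_of_lt_of_le one_pos (hα i)
  refine ⟨?_, ?_, ?_⟩
  · intro N p
    rw [hb]
    exact div_pos (mul_pos (hw_pos _ _) (Real.exp_pos _)) (hv _)
  · intro N p
    rw [hb, hb]
    rw [div_le_div_iff_of_pos_right (hv p.1)]
    have hexps : (N:ℝ) * α p.1 ≤ ((N:ℝ)+1) * α p.1 := by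
      nlinarith [hαpos p.1]
    refine mul_le_mul (hw_mono N p.2) ?_ (Real.exp_pos _).le (hw_pos _ _).le
    rw [Real.exp_le_exp]
    push_cast
    exact hexps
  · obtain ⟨n, hn⟩ := hwDN
    refine ⟨n, fun m hm θ hθ0 hθ1 => ?_⟩
    obtain ⟨k, hk, C, hC, hw⟩ := hn m hm θ hθ0 hθ1
    set k' : ℕ := max (max k m) (n + ⌈((m:ℝ) - (n:ℝ)) / θ⌉₊) with hk'def
    have hk'm : m ≤ k' := le_trans (le_max_right k m) (le_max_left _ _)
    have hk'k : k ≤ k' := le_trans (le_max_left k m) (le_max_left _ _)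
    refine ⟨k', hk'm, C, hC, ?_⟩
    rintro ⟨i, j⟩
    have hθ1' : (0:ℝ) < 1 - θ := by linarith
    -- exponent inequality
    have hexp : (m:ℝ) ≤ θ * k' + (1 - θ) * n := by
      have h1 : (n + ⌈((m:ℝ) - (n:ℝ)) / θ⌉₊ : ℕ) ≤ k' := le_max_right _ _
      have h2 : ((m:ℝ) - n) / θ ≤ (⌈((m:ℝ) - (n:ℝ)) / θ⌉₊ : ℝ) := Nat.le_ceil _
      have h3 : ((n:ℝ) + (⌈((m:ℝ) - (n:ℝ)) / θ⌉₊ : ℝ)) ≤ (k' : ℝ) := by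
        exact_mod_cast h1
      have h4 : ((m:ℝ) - n) / θ ≤ (k':ℝ) - n := by linarith
      have h5 : (m:ℝ) - n ≤ θ * ((k':ℝ) - n) := by
        rw [div_le_iff₀ hθ0] at h4
        linarith [h4]
      linarith
    -- main inequality
    have hwle : w m j ≤ C * w k' j ^ θ * w n j ^ (1 - θ) := by
      refine le_trans (hw j) ?_
      have h1 : w k j ^ θ ≤ w k' j ^ θ :=
        Real.rpow_le_rpow (hw_pos k j).le (hwm j hk'k) hθ0.le
      have h2 : (0:ℝ) ≤ w n j ^ (1 - θ) := (Real.rpow_pos_of_pos (hw_pos n j) _).le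
      exact mul_le_mul_of_nonneg_right (mul_le_mul_of_nonneg_left h1 hC.le) h2
    have hvne : v i ≠ 0 := (hv i).ne'
    have hbig : b k' (i, j) ^ θ * b n (i, j) ^ (1 - θ)
        = (w k' j ^ θ * w n j ^ (1 - θ)) * Real.exp ((θ * k' + (1 - θ) * n) * α i) / v i := by
      rw [hb, hb]
      simp only
      rw [show (θ * (k':ℝ) + (1 - θ) * n) * α i
          = (k':ℝ) * α i * θ + (n:ℝ) * α i * (1 - θ) by ring]
      rw [Real.div_rpow (mul_pos (hw_pos _ _) (Real.exp_pos _)).le (hv i).le,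
        Real.div_rpow (mul_pos (hw_pos _ _) (Real.exp_pos _)).le (hv i).le,
        Real.mul_rpow (hw_pos _ j).le (Real.exp_pos _).le,
        Real.mul_rpow (hw_pos _ j).le (Real.exp_pos _).le,
        ← Real.exp_mul, ← Real.exp_mul, Real.exp_add]
      have hvv : v i ^ θ * v i ^ (1 - θ) = v i := by
        rw [← Real.rpow_add (hv i)]
        simp
      rw [div_mul_div_comm, hvv]
      ring
    rw [mul_assoc, hbig, hb]
    simp only
    rw [mul_div_assoc']
    rw [div_le_div_iff_of_pos_right (hv i)]
    have hexp2 : Real.exp ((m:ℝ) * α i) ≤ Real.exp ((θ * k' + (1 - θ) * n) * α i) := by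
      apply Real.exp_le_exp.mpr
      exact mul_le_mul_of_nonneg_right hexp (hαpos i).le
    have hCpos : (0:ℝ) ≤ C * w k' j ^ θ * w n j ^ (1 - θ) :=
      (mul_pos (mul_pos hC (Real.rpow_pos_of_pos (hw_pos k' j) θ))
        (Real.rpow_pos_of_pos (hw_pos n j) (1 - θ))).le
    exact le_trans (mul_le_mul hwle hexp2 (Real.exp_pos _).le hCpos) (le_of_eq (by ring))
end

section
/- Let I and J be index sets, let w be a weight matrix on J satisfying (Ω), let (α_i)_{i∈I} be real numbers with α_i ≥ 1, and let (v_i)_{i∈I} be positive real numbers. Define b_{N,(i,j)} = w_{N,j}·e^{N·α_i}/v_i for N ∈ ℕ and (i,j) ∈ I×J. Then b = (b_N)_{N∈ℕ} is a weight matrix on the index set I×J and b satisfies (Ω). -/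
def SatisfiesOmega {I : Type*} (a : ℕ → I → ℝ) : Prop :=
  ∀ n : ℕ, ∃ m ≥ n, ∀ k ≥ m, ∃ θ : ℝ, 0 < θ ∧ θ < 1 ∧
    ∃ C > (0 : ℝ), ∀ i, a k i ^ θ * a n i ^ (1 - θ) ≤ C * a m i

lemma aux_pow_shrink {x y z C θ θ' : ℝ} (hx : 0 < x) (hy : 0 < y) (hz : 0 < z)
    (hyz : y ≤ z) (hθ : 0 < θ) (h2 : 0 < θ') (h3 : θ' ≤ θ) (hC : 0 < C)
    (h : x ^ θ * y ^ (1 - θ) ≤ C * z) :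
    x ^ θ' * y ^ (1 - θ') ≤ max C 1 * z := by
  set t := θ' / θ with ht
  have htθ : θ * t = θ' := by rw [ht]; field_simp
  have ht0 : 0 < t := div_pos h2 hθ
  have ht1 : t ≤ 1 := (div_le_one hθ).2 h3
  have h1 : (x ^ θ * y ^ (1 - θ)) ^ t ≤ (C * z) ^ t :=
    Real.rpow_le_rpow (by positivity) h ht0.le
  have e1 : (x ^ θ * y ^ (1 - θ)) ^ t = x ^ θ' * y ^ ((1 - θ) * t) := by
    rw [Real.mul_rpow (by positivity) (by positivity), ← Real.rpow_mul hx.le,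
      ← Real.rpow_mul hy.le, htθ]
  have e2 : (C * z) ^ t = C ^ t * z ^ t := Real.mul_rpow hC.le hz.le
  have key : x ^ θ' * y ^ ((1 - θ) * t) * y ^ (1 - t) ≤ C ^ t * z ^ t * y ^ (1 - t) := by
    apply mul_le_mul_of_nonneg_right _ (by positivity)
    rw [← e1, ← e2]; exact h1
  have e3 : x ^ θ' * y ^ ((1 - θ) * t) * y ^ (1 - t) = x ^ θ' * y ^ (1 - θ') := by
    rw [mul_assoc, ← Real.rpow_add hy]
    have : (1 - θ) * t + (1 - t) = 1 - θ' := by nlinarith [htθ]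
    rw [this]
  have e4 : C ^ t * z ^ t * y ^ (1 - t) ≤ max C 1 * z := by
    have hy' : y ^ (1 - t) ≤ z ^ (1 - t) := Real.rpow_le_rpow hy.le hyz (by linarith)
    have hCt : C ^ t ≤ max C 1 := by
      rcases le_total C 1 with h' | h'
      · exact le_trans (Real.rpow_le_one hC.le h' ht0.le) (le_max_right _ _)
      · refine le_trans (Real.rpow_le_rpow_of_exponent_le h' ht1) ?_
        rw [Real.rpow_one]; exact le_max_left _ _
    calc C ^ t * z ^ t * y ^ (1 - t) ≤ C ^ t * z ^ t * z ^ (1 - t) := by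
          exact mul_le_mul_of_nonneg_left hy' (by positivity)
      _ = C ^ t * z := by rw [mul_assoc, ← Real.rpow_add hz]; norm_num
      _ ≤ max C 1 * z := mul_le_mul_of_nonneg_right hCt hz.le
  calc x ^ θ' * y ^ (1 - θ') = x ^ θ' * y ^ ((1 - θ) * t) * y ^ (1 - t) := e3.symm
    _ ≤ C ^ t * z ^ t * y ^ (1 - t) := key
    _ ≤ max C 1 * z := e4

/-- Let `w` be a weight matrix on `J` satisfying (Ω), `(α_i)_{i∈I}` with `α_i ≥ 1`, and
`(v_i)` positive. Then `b_{N,(i,j)} = w_{N,j}·e^{N·α_i}/v_i` is a weight matrix on `I × J`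
satisfying (Ω). -/
theorem weight_matrix_Omega
    {I J : Type*} [Countable I] [Infinite I] [Countable J] [Infinite J]
    (w : ℕ → J → ℝ)
    (hw_pos : ∀ N j, 0 < w N j)
    (hw_mono : ∀ N j, w N j ≤ w (N + 1) j)
    (hwOm : SatisfiesOmega w)
    (α : I → ℝ) (hα : ∀ i, 1 ≤ α i)
    (v : I → ℝ) (hv : ∀ i, 0 < v i)
    (b : ℕ → I × J → ℝ)
    (hb : ∀ N p, b N p = w N p.2 * Real.exp ((N : ℝ) * α p.1) / v p.1) :
    (∀ N p, 0 < b N p) ∧ (∀ N p, b N p ≤ b (N + 1) p) ∧ SatisfiesOmega b := by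
  have hwm : ∀ j, Monotone fun N => w N j := fun j =>
    monotone_nat_of_le_succ fun N => hw_mono N j
  refine ⟨fun N p => by
      rw [hb]
      exact div_pos (mul_pos (hw_pos N p.2) (Real.exp_pos _)) (hv p.1), ?_, ?_⟩
  · intro N p
    rw [hb, hb]
    have hα0 : 0 < α p.1 := lt_of_lt_of_le one_pos (hα p.1)
    have hexp : Real.exp ((N:ℝ) * α p.1) ≤ Real.exp (((N:ℝ)+1) * α p.1) := by
      apply Real.exp_le_exp.2
      nlinarith [hα0]
    have : ((N+1 : ℕ):ℝ) = (N:ℝ) + 1 := by push_cast; ring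
    rw [this]
    gcongr <;> first
      | exact hw_mono N p.2
      | exact hexp
      | exact (hv p.1).le
      | exact (hw_pos _ _).le
      | exact (Real.exp_pos _).le
      | positivity
  · intro n
    obtain ⟨m, hmn, hm⟩ := hwOm n
    refine ⟨m + 1, by omega, fun k hk => ?_⟩
    obtain ⟨θ, hθ0, hθ1, C, hC0, hC⟩ := hm k (by omega)
    have hkn : (0:ℝ) < (k:ℝ) - n := by
      have h1 : n < k := by omega
      have h2 : (n:ℝ) < k := by exact_mod_cast h1
      linarith
    have hmn1 : (0:ℝ) < (m:ℝ) + 1 - n := by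
      have : (n:ℝ) ≤ m := by exact_mod_cast hmn
      linarith
    set θ' : ℝ := min θ (((m:ℝ) + 1 - n) / ((k:ℝ) - n)) with hθ'def
    have hθ'0 : 0 < θ' := lt_min hθ0 (div_pos hmn1 hkn)
    have hθ'θ : θ' ≤ θ := min_le_left _ _
    refine ⟨θ', hθ'0, lt_of_le_of_lt hθ'θ hθ1, max C 1, lt_max_of_lt_right one_pos, ?_⟩
    rintro ⟨i, j⟩
    have hαi : 0 < α i := lt_of_lt_of_le one_pos (hα i)
    have hvi := hv i
    have hwk := hw_pos k j
    have hwn := hw_pos n j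
    have hwm1 := hw_pos (m+1) j
    have hrw : ∀ N : ℕ, b N (i, j) = w N j * Real.exp ((N:ℝ) * α i) / v i :=
      fun N => hb N (i, j)
    have expand : b k (i,j) ^ θ' * b n (i,j) ^ (1 - θ') =
        (w k j ^ θ' * w n j ^ (1 - θ')) *
          Real.exp ((θ' * k + (1 - θ') * n) * α i) / v i := by
      rw [hrw k, hrw n,
        Real.div_rpow (by positivity) hvi.le,
        Real.div_rpow (by positivity) hvi.le,
        Real.mul_rpow hwk.le (Real.exp_pos _).le,
        Real.mul_rpow hwn.le (Real.exp_pos _).le,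
        ← Real.exp_mul, ← Real.exp_mul, div_mul_div_comm,
        ← Real.rpow_add hvi]
      rw [show θ' + (1 - θ') = 1 by ring, Real.rpow_one,
        show (θ' * k + (1 - θ') * n) * α i = (k:ℝ) * α i * θ' + (n:ℝ) * α i * (1 - θ') by ring,
        Real.exp_add]
      ring
    rw [expand, hrw (m+1)]
    have hWpart : w k j ^ θ' * w n j ^ (1 - θ') ≤ max C 1 * w (m+1) j := by
      refine aux_pow_shrink hwk hwn hwm1 (hwm j (by omega : n ≤ m+1)) hθ0 hθ'0 hθ'θ hC0 ?_
      exact le_trans (hC j) (by nlinarith [hwm j (Nat.le_succ m), hC0])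
    have hE : (θ' * k + (1 - θ') * n) * α i ≤ ((m:ℝ)+1) * α i := by
      have h1 : θ' ≤ ((m:ℝ) + 1 - n) / ((k:ℝ) - n) := min_le_right _ _
      have h2 : θ' * ((k:ℝ) - n) ≤ (m:ℝ) + 1 - n := by
        rw [← le_div_iff₀ hkn]; exact h1
      have h3 : θ' * k + (1 - θ') * n ≤ (m:ℝ) + 1 := by nlinarith
      nlinarith [hαi]
    have hexp : Real.exp ((θ' * k + (1 - θ') * n) * α i) ≤ Real.exp (((m:ℝ)+1) * α i) :=
      Real.exp_le_exp.2 hE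
    have hcast : (((m+1:ℕ)):ℝ) = (m:ℝ) + 1 := by push_cast; ring
    rw [hcast]
    calc (w k j ^ θ' * w n j ^ (1 - θ')) * Real.exp ((θ' * k + (1 - θ') * n) * α i) / v i
        ≤ (max C 1 * w (m+1) j) * Real.exp (((m:ℝ)+1) * α i) / v i := by
          gcongr <;> first
            | exact hWpart
            | exact hexp
            | exact hvi.le
            | exact (Real.exp_pos _).le
            | exact mul_nonneg (le_of_lt (lt_max_of_lt_right one_pos)) hwm1.le
            | positivity
      _ = max C 1 * (w (m+1) j * Real.exp (((m:ℝ)+1) * α i) / v i) := by ring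
end

section
/- Let I and J be index sets, let a be a dual weight matrix on I and b a dual weight matrix on J. Let r ∈ ℕ ∪ {∞}, α₂ : {0,…,r} → ℕ and α₃ : {0,…,r} → [1,∞) (where {0,…,∞} means ℕ). Let D = {c : I → ℂ : Σ_{i∈I} |c_i|·a_{M,i} < ∞ for some M ∈ ℕ with M ≤ r} (a vector subspace of ℂ^I, since a_{M+1,i} ≤ a_{M,i}), and let T : D → (J → ℂ) be a linear map such that for every M ∈ ℕ with M ≤ r and every c ∈ D with Σ_{i∈I} |c_i|·a_{M,i} < ∞ one has sup_{j∈J} b_{α₂(M),j}·|T(c)(j)| ≤ α₃(M)·Σ_{i∈I} |c_i|·a_{M,i}. For i ∈ I let e_i ∈ D be the indicator function of {i} and set T_{i,j} = T(e_i)(j). Then: (a) |T_{i,j}| ≤ inf_{M∈ℕ, M ≤ r} α₃(M)·a_{M,i}/b_{α₂(M),j} for all (i,j) ∈ I×J; (b) for every c ∈ D and every j ∈ J, the family (c_i·T_{i,j})_{i∈I} is absolutely summable and T(c)(j) = Σ_{i∈I} c_i·T_{i,j}. -/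
/-!
Testing the bound on `e i` gives (a). For (b), fix `M` with `∑ ‖c i‖ a_{M,i} < ∞` and a finite
`s ⊆ I`, and split `c` into its restriction to `s` and its restriction to `sᶜ`. Both pieces lie in
`D`, so linearity gives `T c j - ∑_{i ∈ s} c i T_{i,j} = T (1_{sᶜ} c) j`, and the bound at level
`M` controls this by `α₃ M / b_{α₂ M, j}` times the tail `∑_{i ∉ s} ‖c i‖ a_{M,i}`, which tends
to `0` as `s` grows. Absolute summability then comes for free, `ℂ` being finite-dimensional.
-/

section WeightedNorm

variable {I E : Type*} [SeminormedAddCommGroup E]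

theorem norm_indicator_mul (t : Set I) (c : I → E) (w : I → ℝ) (i : I) :
    ‖t.indicator c i‖ * w i = t.indicator (fun i => ‖c i‖ * w i) i := by
  by_cases hi : i ∈ t <;> simp [hi]

theorem summable_norm_indicator_finset_mul (s : Finset I) (c : I → E) (w : I → ℝ) :
    Summable fun i => ‖(s : Set I).indicator c i‖ * w i :=
  summable_of_ne_finset_zero (s := s) fun i hi => by simp [hi]

theorem Summable.norm_indicator_compl_mul {c : I → E} {w : I → ℝ}
    (h : Summable fun i => ‖c i‖ * w i) (s : Finset I) :
    Summable fun i => ‖(s : Set I)ᶜ.indicator c i‖ * w i := by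
  simpa only [norm_indicator_mul] using h.indicator _

theorem tsum_norm_indicator_compl_mul (s : Finset I) (c : I → E) (w : I → ℝ) :
    ∑' i, ‖(s : Set I)ᶜ.indicator c i‖ * w i = ∑' i : {i // i ∉ s}, ‖c i‖ * w i := by
  simp only [norm_indicator_mul]
  exact (tsum_subtype _ _).symm

theorem hasSum_of_norm_sub_sum_le_tsum_compl {f : I → E} {x : E} (g : I → ℝ) (C : ℝ)
    (h : ∀ s : Finset I, ‖x - ∑ i ∈ s, f i‖ ≤ C * ∑' i : {i // i ∉ s}, g i) : HasSum f x := by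
  have htail := (tendsto_tsum_compl_atTop_zero g).const_mul C
  rw [mul_zero] at htail
  refine tendsto_iff_norm_sub_tendsto_zero.mpr (squeeze_zero (fun _ => norm_nonneg _) ?_ htail)
  exact fun s => norm_sub_rev x _ ▸ h s

end WeightedNorm

section FiniteLinearity

variable {I 𝕜 F : Type*} [Semiring 𝕜] [AddCommMonoid F] [Module 𝕜 F]
  {D : Set (I → 𝕜)} {T : (I → 𝕜) → F}

theorem map_indicator_finset_eq_sum (hD : ∀ (s : Finset I) c, (s : Set I).indicator c ∈ D)
    (hT_add : ∀ c c', c ∈ D → c' ∈ D → T (c + c') = T c + T c')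
    (hT_smul : ∀ (x : 𝕜) c, c ∈ D → T (x • c) = x • T c) (c : I → 𝕜) (s : Finset I) :
    T ((s : Set I).indicator c) = ∑ i ∈ s, c i • T (({i} : Set I).indicator fun _ => 1) := by
  classical
  have hD_single : ∀ (i : I) c, ({i} : Set I).indicator c ∈ D := fun i c => by
    simpa only [Finset.coe_singleton] using hD {i} c
  induction s using Finset.induction_on with
  | empty =>
    have h0 : (0 : I → 𝕜) ∈ D := by simpa [Pi.zero_def] using hD ∅ c
    simpa [Pi.zero_def] using hT_smul 0 0 h0
  | insert i s hi ih =>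
    have hsplit : ((insert i s : Finset I) : Set I).indicator c
        = ({i} : Set I).indicator c + (s : Set I).indicator c := by
      rw [Finset.coe_insert, Set.insert_eq,
        Set.indicator_union_of_disjoint (by simpa using hi)]
      rfl
    have hsingle : ({i} : Set I).indicator c = c i • ({i} : Set I).indicator fun _ => 1 := by
      ext i'
      by_cases h : i' = i <;> simp [h]
    rw [hsplit, hT_add _ _ (hD_single i c) (hD s c), hsingle, hT_smul _ _ (hD_single i _), ih,
      Finset.sum_insert hi]

theorem map_eq_map_indicator_compl_add_sum (hD : ∀ (s : Finset I) c, (s : Set I).indicator c ∈ D)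
    (hT_add : ∀ c c', c ∈ D → c' ∈ D → T (c + c') = T c + T c')
    (hT_smul : ∀ (x : 𝕜) c, c ∈ D → T (x • c) = x • T c) {c : I → 𝕜} (s : Finset I)
    (hc : (s : Set I)ᶜ.indicator c ∈ D) :
    T c = T ((s : Set I)ᶜ.indicator c)
      + ∑ i ∈ s, c i • T (({i} : Set I).indicator fun _ => 1) := by
  rw [← map_indicator_finset_eq_sum hD hT_add hT_smul, ← hT_add _ _ hc (hD s c),
    Set.indicator_compl_add_self]

end FiniteLinearity

theorem matrix_representation_of_bounded_operator_general
    {I J : Type*}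
    (a : ℕ → I → ℝ)
    (b : ℕ → J → ℝ) (hb_pos : ∀ N j, 0 < b N j)
    (r : ℕ∞) (α₂ : ℕ → ℕ) (α₃ : ℕ → ℝ)
    (D : Set (I → ℂ))
    (hD : D = {c | ∃ M : ℕ, (M : ℕ∞) ≤ r ∧ Summable fun i => ‖c i‖ * a M i})
    (T : (I → ℂ) → (J → ℂ))
    (hT_add : ∀ c c', c ∈ D → c' ∈ D → T (c + c') = T c + T c')
    (hT_smul : ∀ (s : ℂ) (c), c ∈ D → T (s • c) = s • T c)
    (hT_bound : ∀ M : ℕ, (M : ℕ∞) ≤ r → ∀ c ∈ D, (Summable fun i => ‖c i‖ * a M i) →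
      ∀ j, b (α₂ M) j * ‖T c j‖ ≤ α₃ M * ∑' i, ‖c i‖ * a M i)
    (e : I → (I → ℂ))
    (he : ∀ i, e i = Set.indicator {i} (fun _ => 1)) :
    (∀ (i : I) (j : J) (M : ℕ), (M : ℕ∞) ≤ r →
      ‖T (e i) j‖ ≤ α₃ M * a M i / b (α₂ M) j) ∧
    ∀ c ∈ D, ∀ j, (Summable fun i => ‖c i * T (e i) j‖) ∧
      T c j = ∑' i, c i * T (e i) j := by
  have hD_finset (s : Finset I) (c : I → ℂ) : (s : Set I).indicator c ∈ D :=
    hD ▸ ⟨0, zero_le, summable_norm_indicator_finset_mul s c _⟩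
  refine ⟨fun i j M hM => ?_, fun c hc j => ?_⟩
  · have hsum : Summable fun i' => ‖e i i'‖ * a M i' := by
      simpa [he] using summable_norm_indicator_finset_mul {i} (fun _ : I => (1 : ℂ)) (a M)
    have hbound := hT_bound M hM (e i) (by simpa [he] using hD_finset {i} fun _ => 1) hsum j
    have htsum : ∑' i', ‖e i i'‖ * a M i' = a M i := by
      rw [he i, tsum_eq_single i (by simp +contextual)]
      simp
    rw [htsum] at hbound
    rw [le_div_iff₀ (hb_pos _ _)]
    linarith
  obtain ⟨M, hM, hsum⟩ := hD ▸ hc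
  have hrep : HasSum (fun i => c i * T (e i) j) (T c j) := by
    refine hasSum_of_norm_sub_sum_le_tsum_compl (fun i => ‖c i‖ * a M i)
      (α₃ M / b (α₂ M) j) fun s => ?_
    have htail_mem : (s : Set I)ᶜ.indicator c ∈ D :=
      hD ▸ ⟨M, hM, hsum.norm_indicator_compl_mul s⟩
    have hbound := hT_bound M hM _ htail_mem (hsum.norm_indicator_compl_mul s) j
    have hsplit := congrFun (map_eq_map_indicator_compl_add_sum hD_finset hT_add hT_smul s
      htail_mem) j
    simp only [Pi.add_apply, Finset.sum_apply, Pi.smul_apply, smul_eq_mul, ← he] at hsplit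
    rw [tsum_norm_indicator_compl_mul] at hbound
    rw [hsplit, add_sub_cancel_right, div_mul_eq_mul_div, le_div_iff₀' (hb_pos _ _)]
    exact hbound
  exact ⟨summable_norm_iff.mpr hrep.summable, hrep.tsum_eq.symm⟩

/-- Let `a`, `b` be dual weight matrices on index sets `I`, `J`, let `r ∈ ℕ ∪ {∞}`,
`α₂ : {0,…,r} → ℕ`, `α₃ : {0,…,r} → [1,∞)`. Let
`D = {c : I → ℂ | Σ_i |c_i|·a_{M,i} < ∞ for some M ≤ r}` and let `T : D → (J → ℂ)` be a
linear map satisfying, for every `M ≤ r` and `c ∈ D` with `Σ_i |c_i|·a_{M,i} < ∞`,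
`sup_j b_{α₂(M),j}·|T(c)(j)| ≤ α₃(M)·Σ_i |c_i|·a_{M,i}`. With `e_i` the indicator of `{i}`
and `T_{i,j} = T(e_i)(j)`, we have: (a) `|T_{i,j}| ≤ α₃(M)·a_{M,i}/b_{α₂(M),j}` for all
`M ≤ r`; (b) for every `c ∈ D` and `j ∈ J`, `(c_i·T_{i,j})_i` is absolutely summable and
`T(c)(j) = Σ_i c_i·T_{i,j}`. -/
theorem matrix_representation_of_bounded_operator
    {I J : Type*} [Countable I] [Infinite I] [Countable J] [Infinite J]
    (a : ℕ → I → ℝ) (ha_pos : ∀ N i, 0 < a N i) (ha_anti : ∀ N i, a (N + 1) i ≤ a N i)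
    (b : ℕ → J → ℝ) (hb_pos : ∀ N j, 0 < b N j) (hb_anti : ∀ N j, b (N + 1) j ≤ b N j)
    (r : ℕ∞) (α₂ : ℕ → ℕ) (α₃ : ℕ → ℝ)
    (hα₃ : ∀ M : ℕ, (M : ℕ∞) ≤ r → 1 ≤ α₃ M)
    (D : Set (I → ℂ))
    (hD : D = {c | ∃ M : ℕ, (M : ℕ∞) ≤ r ∧ Summable fun i => ‖c i‖ * a M i})
    (T : (I → ℂ) → (J → ℂ))
    (hT_add : ∀ c c', c ∈ D → c' ∈ D → T (c + c') = T c + T c')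
    (hT_smul : ∀ (s : ℂ) (c), c ∈ D → T (s • c) = s • T c)
    (hT_bound : ∀ M : ℕ, (M : ℕ∞) ≤ r → ∀ c ∈ D, (Summable fun i => ‖c i‖ * a M i) →
      ∀ j, b (α₂ M) j * ‖T c j‖ ≤ α₃ M * ∑' i, ‖c i‖ * a M i)
    (e : I → (I → ℂ))
    (he : ∀ i, e i = Set.indicator {i} (fun _ => 1)) :
    (∀ (i : I) (j : J) (M : ℕ), (M : ℕ∞) ≤ r →
      ‖T (e i) j‖ ≤ α₃ M * a M i / b (α₂ M) j) ∧
    ∀ c ∈ D, ∀ j, (Summable fun i => ‖c i * T (e i) j‖) ∧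
      T c j = ∑' i, c i * T (e i) j :=
  matrix_representation_of_bounded_operator_general a b hb_pos r α₂ α₃ D hD T hT_add hT_smul
    hT_bound e he
end

section
/- Fix index sets I₀, I₁, J₀, J₁ and weight matrices v, w, x, y on I₀, I₁, J₀, J₁ respectively, and assume y satisfies the base-0 form of (DN). Let r_β ≤ r_γ be natural numbers, let β be a triple of length r_β, let γ be a triple of length r_γ, let β̃ be a triple of length ∞ extending β, and let m, k ∈ ℕ. Set Q = {(i,j) ∈ (I₀×I₁)×(J₀×J₁) : C^m_β(i,j) ≤ C^k_γ(i,j)}. Then for every M ∈ ℕ with M > r_γ there exist N₀ ∈ ℕ and R₀ > 0 such that for all (i,j) = ((i₀,i₁),(j₀,j₁)) ∈ Q: β̃₃(M)·(v_{β₁,i₀}/w_{M,i₁})·(y_{β̃₂(M),j₁}/x_{m,j₀}) ≤ R₀·(v_{γ₁,i₀}/w_{M,i₁})·(y_{N₀,j₁}/x_{k,j₀}). -/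
/-- Given weight matrices `v, w, x, y`, a level `n`, a length `r ∈ ℕ ∪ {∞}` and a triple
`(a1, a2, a3)`, we set
`C^n_α(i,j) = inf_{M ≤ r} a3(M)·(v_{a1,i₀}/w_{M,i₁})·(y_{a2(M),j₁}/x_{n,j₀})`. -/
noncomputable def Cw {I₀ I₁ J₀ J₁ : Type*} (v : ℕ → I₀ → ℝ) (w : ℕ → I₁ → ℝ)
    (x : ℕ → J₀ → ℝ) (y : ℕ → J₁ → ℝ) (n : ℕ) (r : ℕ∞)
    (a1 : ℕ) (a2 : ℕ → ℕ) (a3 : ℕ → ℝ) (p : (I₀ × I₁) × (J₀ × J₁)) : ℝ :=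
  ⨅ M : {M : ℕ // (M : ℕ∞) ≤ r},
    a3 M.1 * (v a1 p.1.1 / w M.1 p.1.2) * (y (a2 M.1) p.2.2 / x n p.2.1)

/-- On the set `Q = {(i,j) : C^m_β(i,j) ≤ C^k_γ(i,j)}`, assuming `y` satisfies the base-0
form of (DN), every index `M > r_γ` admits `N₀ ∈ ℕ` and `R₀ > 0` such that
`β̃₃(M)·(v_{β₁,i₀}/w_{M,i₁})·(y_{β̃₂(M),j₁}/x_{m,j₀})
  ≤ R₀·(v_{γ₁,i₀}/w_{M,i₁})·(y_{N₀,j₁}/x_{k,j₀})` on `Q`,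
where `β̃` is a triple of length `∞` extending `β`. -/
theorem index_extension
    {I₀ I₁ J₀ J₁ : Type*}
    [Countable I₀] [Infinite I₀] [Countable I₁] [Infinite I₁]
    [Countable J₀] [Infinite J₀] [Countable J₁] [Infinite J₁]
    (v : ℕ → I₀ → ℝ) (hv_pos : ∀ n i, 0 < v n i) (hv_mono : ∀ n i, v n i ≤ v (n + 1) i)
    (w : ℕ → I₁ → ℝ) (hw_pos : ∀ n i, 0 < w n i) (hw_mono : ∀ n i, w n i ≤ w (n + 1) i)
    (x : ℕ → J₀ → ℝ) (hx_pos : ∀ n j, 0 < x n j) (hx_mono : ∀ n j, x n j ≤ x (n + 1) j)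
    (y : ℕ → J₁ → ℝ) (hy_pos : ∀ n j, 0 < y n j) (hy_mono : ∀ n j, y n j ≤ y (n + 1) j)
    -- `y` satisfies the base-0 form of (DN)
    (hyDN : ∀ m : ℕ, ∀ θ : ℝ, 0 < θ → θ < 1 →
      ∃ k ≥ m, ∃ C > (0 : ℝ), ∀ j₁, y m j₁ ≤ C * y k j₁ ^ θ * y 0 j₁ ^ (1 - θ))
    (rβ rγ : ℕ) (hr : rβ ≤ rγ)
    -- the triple `β` of length `rβ`
    (β₁ : ℕ) (β₂ : ℕ → ℕ) (β₃ : ℕ → ℝ) (hβ₃ : ∀ M ≤ rβ, 1 ≤ β₃ M)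
    -- the triple `γ` of length `rγ`
    (γ₁ : ℕ) (γ₂ : ℕ → ℕ) (γ₃ : ℕ → ℝ) (hγ₃ : ∀ M ≤ rγ, 1 ≤ γ₃ M)
    -- the triple `β̃` of length `∞` extending `β`
    (βt₂ : ℕ → ℕ) (βt₃ : ℕ → ℝ) (hβt₃ : ∀ M, 1 ≤ βt₃ M)
    (hext : ∀ M ≤ rβ, βt₂ M = β₂ M ∧ βt₃ M = β₃ M)
    (m k : ℕ) (M : ℕ) (hM : rγ < M) :
    ∃ N₀ : ℕ, ∃ R₀ > (0 : ℝ), ∀ p : (I₀ × I₁) × (J₀ × J₁),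
      Cw v w x y m (rβ : ℕ∞) β₁ β₂ β₃ p ≤ Cw v w x y k (rγ : ℕ∞) γ₁ γ₂ γ₃ p →
      βt₃ M * (v β₁ p.1.1 / w M p.1.2) * (y (βt₂ M) p.2.2 / x m p.2.1) ≤
        R₀ * (v γ₁ p.1.1 / w M p.1.2) * (y N₀ p.2.2 / x k p.2.1) := by
  have hwm : ∀ i, Monotone fun n => w n i := fun i => monotone_nat_of_le_succ fun n => hw_mono n i
  have hym : ∀ j, Monotone fun n => y n j := fun j => monotone_nat_of_le_succ fun n => hy_mono n j
  obtain ⟨K, hK, C, hC, hDN⟩ :=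
    hyDN (max (βt₂ M) (γ₂ rγ)) (1/2) (by norm_num) (by norm_num)
  have hG : (1:ℝ) ≤ γ₃ rγ := hγ₃ rγ le_rfl
  have hBt : (1:ℝ) ≤ βt₃ M := hβt₃ M
  have hBt0 : (0:ℝ) < βt₃ M := lt_of_lt_of_le one_pos hBt
  have hG0 : (0:ℝ) < γ₃ rγ := lt_of_lt_of_le one_pos hG
  refine ⟨K, βt₃ M * γ₃ rγ * C^2,
    mul_pos (mul_pos hBt0 hG0) (pow_pos hC 2), ?_⟩
  rintro ⟨⟨i₀, i₁⟩, j₀, j₁⟩ hp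
  -- lower bound for Cw β
  haveI : Nonempty {M : ℕ // (M : ℕ∞) ≤ (rβ : ℕ∞)} := ⟨⟨0, by simp⟩⟩
  have hlow : v β₁ i₀ / w rβ i₁ * (y 0 j₁ / x m j₀) ≤
      Cw v w x y m (rβ : ℕ∞) β₁ β₂ β₃ ((i₀, i₁), j₀, j₁) := by
    refine le_ciInf fun M' => ?_
    obtain ⟨M', hM'⟩ := M'
    have hM'' : M' ≤ rβ := Nat.cast_le.mp hM'
    have h1 : w M' i₁ ≤ w rβ i₁ := hwm i₁ hM''
    have h2 : y 0 j₁ ≤ y (β₂ M') j₁ := hym j₁ (Nat.zero_le _)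
    have h3 : (1:ℝ) ≤ β₃ M' := hβ₃ M' hM''
    calc v β₁ i₀ / w rβ i₁ * (y 0 j₁ / x m j₀)
        = 1 * (v β₁ i₀ / w rβ i₁) * (y 0 j₁ / x m j₀) := by ring
      _ ≤ β₃ M' * (v β₁ i₀ / w M' i₁) * (y (β₂ M') j₁ / x m j₀) := by
          have hv0 := (hv_pos β₁ i₀).le
          have hw0 := hw_pos M' i₁
          gcongr
          · exact (div_pos (hy_pos 0 j₁) (hx_pos m j₀)).le
          · exact (div_pos (hv_pos β₁ i₀) (hw_pos rβ i₁)).le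
          · exact (hx_pos m j₀).le
  -- upper bound for Cw γ
  have hup : Cw v w x y k (rγ : ℕ∞) γ₁ γ₂ γ₃ ((i₀, i₁), j₀, j₁) ≤
      γ₃ rγ * (v γ₁ i₀ / w rγ i₁) * (y (γ₂ rγ) j₁ / x k j₀) := by
    have hbdd : BddBelow (Set.range fun M' : {N : ℕ // (N : ℕ∞) ≤ (rγ : ℕ∞)} =>
        γ₃ M'.1 * (v γ₁ i₀ / w M'.1 i₁) * (y (γ₂ M'.1) j₁ / x k j₀)) := by
      refine ⟨0, ?_⟩
      rintro z ⟨⟨M', hM'⟩, rfl⟩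
      have hg : (0:ℝ) < γ₃ M' := lt_of_lt_of_le one_pos (hγ₃ M' (Nat.cast_le.mp hM'))
      exact le_of_lt (mul_pos (mul_pos hg (div_pos (hv_pos _ _) (hw_pos _ _)))
        (div_pos (hy_pos _ _) (hx_pos _ _)))
    exact ciInf_le hbdd ⟨rγ, le_rfl⟩
  have h := hlow.trans (hp.trans hup)
  -- key1 : v β₁ i₀ * y 0 j₁ * x k j₀ ≤ γ₃ rγ * v γ₁ i₀ * y (γ₂ rγ) j₁ * x m j₀
  have key1 : v β₁ i₀ * y 0 j₁ * x k j₀ ≤ γ₃ rγ * v γ₁ i₀ * y (γ₂ rγ) j₁ * x m j₀ := by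
    rw [show v β₁ i₀ / w rβ i₁ * (y 0 j₁ / x m j₀)
          = v β₁ i₀ * y 0 j₁ / (w rβ i₁ * x m j₀) by ring,
        show γ₃ rγ * (v γ₁ i₀ / w rγ i₁) * (y (γ₂ rγ) j₁ / x k j₀)
          = γ₃ rγ * v γ₁ i₀ * y (γ₂ rγ) j₁ / (w rγ i₁ * x k j₀) by ring,
        div_le_div_iff₀ (mul_pos (hw_pos rβ i₁) (hx_pos m j₀))
          (mul_pos (hw_pos rγ i₁) (hx_pos k j₀))] at h
    have hw12 : w rβ i₁ ≤ w rγ i₁ := hwm i₁ hr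
    have hA : (0:ℝ) ≤ v β₁ i₀ * y 0 j₁ * x k j₀ :=
      (mul_pos (mul_pos (hv_pos β₁ i₀) (hy_pos 0 j₁)) (hx_pos k j₀)).le
    refine le_of_mul_le_mul_right ?_ (hw_pos rβ i₁)
    nlinarith [mul_le_mul_of_nonneg_left hw12 hA]
  -- key2 : product estimate from (DN)
  have hhalf : ∀ z : ℝ, 0 < z → z ^ (1/2:ℝ) * z ^ (1/2:ℝ) = z := fun z hz => by
    rw [← Real.rpow_add hz]; norm_num
  have key2 : y (βt₂ M) j₁ * y (γ₂ rγ) j₁ ≤ C^2 * y K j₁ * y 0 j₁ := by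
    have h1 : y (βt₂ M) j₁ ≤ y (max (βt₂ M) (γ₂ rγ)) j₁ := hym j₁ (le_max_left _ _)
    have h2 : y (γ₂ rγ) j₁ ≤ y (max (βt₂ M) (γ₂ rγ)) j₁ := hym j₁ (le_max_right _ _)
    have hy0 : ∀ n, (0:ℝ) ≤ y n j₁ := fun n => (hy_pos n j₁).le
    have hrpow : (0:ℝ) ≤ C * y K j₁ ^ ((1:ℝ)/2) * y 0 j₁ ^ (1 - (1:ℝ)/2) :=
      mul_nonneg (mul_nonneg hC.le (Real.rpow_nonneg (hy0 K) _)) (Real.rpow_nonneg (hy0 0) _)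
    have h3 := mul_le_mul (hDN j₁) (hDN j₁) (hy0 _) hrpow
    have h4 : (C * y K j₁ ^ ((1:ℝ)/2) * y 0 j₁ ^ (1 - (1:ℝ)/2)) *
        (C * y K j₁ ^ ((1:ℝ)/2) * y 0 j₁ ^ (1 - (1:ℝ)/2)) = C^2 * y K j₁ * y 0 j₁ := by
      have e1 : (1 - (1:ℝ)/2) = 1/2 := by norm_num
      rw [e1, show (C * y K j₁ ^ ((1:ℝ)/2) * y 0 j₁ ^ ((1:ℝ)/2)) *
            (C * y K j₁ ^ ((1:ℝ)/2) * y 0 j₁ ^ ((1:ℝ)/2))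
          = C^2 * (y K j₁ ^ ((1:ℝ)/2) * y K j₁ ^ ((1:ℝ)/2)) *
            (y 0 j₁ ^ ((1:ℝ)/2) * y 0 j₁ ^ ((1:ℝ)/2)) by ring,
        hhalf _ (hy_pos K j₁), hhalf _ (hy_pos 0 j₁)]
    calc y (βt₂ M) j₁ * y (γ₂ rγ) j₁
        ≤ y (max (βt₂ M) (γ₂ rγ)) j₁ * y (max (βt₂ M) (γ₂ rγ)) j₁ :=
          mul_le_mul h1 h2 (hy0 _) (hy0 _)
      _ ≤ _ := h4 ▸ h3
  -- combine
  have h5 := mul_le_mul key1 key2 (mul_nonneg (hy_pos _ _).le (hy_pos _ _).le)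
    (mul_pos (mul_pos (mul_pos hG0 (hv_pos γ₁ i₀)) (hy_pos (γ₂ rγ) j₁)) (hx_pos m j₀)).le
  have h6 : v β₁ i₀ * y (βt₂ M) j₁ * x k j₀ ≤
      γ₃ rγ * C^2 * v γ₁ i₀ * y K j₁ * x m j₀ := by
    refine le_of_mul_le_mul_right ?_ (mul_pos (hy_pos 0 j₁) (hy_pos (γ₂ rγ) j₁))
    nlinarith [h5]
  rw [show βt₃ M * (v β₁ i₀ / w M i₁) * (y (βt₂ M) j₁ / x m j₀)
        = βt₃ M * v β₁ i₀ * y (βt₂ M) j₁ / (w M i₁ * x m j₀) by ring,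
      show βt₃ M * γ₃ rγ * C^2 * (v γ₁ i₀ / w M i₁) * (y K j₁ / x k j₀)
        = βt₃ M * γ₃ rγ * C^2 * v γ₁ i₀ * y K j₁ / (w M i₁ * x k j₀) by ring,
      div_le_div_iff₀ (mul_pos (hw_pos M i₁) (hx_pos m j₀))
        (mul_pos (hw_pos M i₁) (hx_pos k j₀))]
  nlinarith [mul_le_mul_of_nonneg_left h6 (mul_nonneg hBt0.le (hw_pos M i₁).le)]
end

section
/- Let α = (α_i)_{i∈ℕ} be an exponent sequence with lim_{i→∞} log(1+i)/α_i = 0. Then for every sequence c : ℕ → ℂ the following are equivalent: (a) for every integer n ≥ 1, sup_{i∈ℕ} |c_i|·e^{−α_i/n} < ∞; (b) for every integer n ≥ 1, Σ_{i∈ℕ} |c_i|·e^{−α_i/n} < ∞. (That is, the power series spaces of finite type Λ^∞_0(α) and Λ^1_0(α) coincide as sets under this condition.) -/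
open Real Filter

/-- Let `α` be an exponent sequence (nondecreasing, positive, tending to `∞`) with
`lim_i log(1+i)/α_i = 0`. Then for every `c : ℕ → ℂ`:
`(∀ n ≥ 1, sup_i |c_i|·e^{−α_i/n} < ∞) ↔ (∀ n ≥ 1, Σ_i |c_i|·e^{−α_i/n} < ∞)`, i.e. the
power series spaces `Λ^∞_0(α)` and `Λ^1_0(α)` coincide as sets. -/
theorem power_series_space_finite_type_eq
    (α : ℕ → ℝ)
    (hα_pos : ∀ i, 0 < α i)
    (hα_mono : Monotone α)
    (hα_tendsto : Filter.Tendsto α Filter.atTop Filter.atTop)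
    (hN : Filter.Tendsto (fun i : ℕ => Real.log (1 + i) / α i) Filter.atTop (nhds 0))
    (c : ℕ → ℂ) :
    (∀ n : ℕ, 1 ≤ n → ∃ C : ℝ, ∀ i, ‖c i‖ * Real.exp (-α i / n) ≤ C) ↔
    (∀ n : ℕ, 1 ≤ n → Summable fun i => ‖c i‖ * Real.exp (-α i / n)) := by
  constructor
  · intro h n hn
    obtain ⟨C, hC⟩ := h (2 * n) (by omega)
    have hnR : (0:ℝ) < n := by exact_mod_cast hn
    set C' := max C 0 with hC'def
    have hC'0 : 0 ≤ C' := le_max_right _ _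
    have hbd : ∀ i, ‖c i‖ * Real.exp (-α i / n) ≤ C' * Real.exp (-α i / (2 * n)) := by
      intro i
      have h1 : (-α i / n : ℝ) = -α i / (2 * n) + -α i / (2 * n) := by
        field_simp; ring
      have h2 := hC i
      push_cast at h2
      rw [h1, Real.exp_add, ← mul_assoc]
      exact mul_le_mul_of_nonneg_right (h2.trans (le_max_left _ _)) (Real.exp_pos _).le
    -- summability of the dominating sequence
    have hsum : Summable fun i : ℕ => Real.exp (-α i / (2 * n)) := by
      apply summable_of_isBigO_nat (g := fun i : ℕ => 1 / (i : ℝ) ^ 2)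
        (summable_one_div_nat_pow.mpr one_lt_two)
      rw [Asymptotics.isBigO_iff]
      refine ⟨1, ?_⟩
      have hsmall : ∀ᶠ i : ℕ in atTop, Real.log (1 + i) / α i < 1 / (4 * n) :=
        hN.eventually (eventually_lt_nhds (by positivity))
      filter_upwards [hsmall, eventually_ge_atTop 1] with i hi hi1
      have hαi := hα_pos i
      have hlog : Real.log (1 + i) * (4 * n) ≤ α i := by
        have := (div_le_div_iff₀ hαi (by positivity : (0:ℝ) < 4 * n)).mp hi.le
        linarith
      have hlog0 : 0 ≤ Real.log (1 + (i:ℝ)) :=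
        Real.log_nonneg (le_add_of_nonneg_right (Nat.cast_nonneg i))
      have hexp : (-α i / (2 * n) : ℝ) ≤ -(2 * Real.log (1 + i)) := by
        rw [div_le_iff₀ (by positivity : (0:ℝ) < 2 * n)]
        nlinarith
      have hkey : Real.exp (-α i / (2 * n)) ≤ 1 / (1 + (i:ℝ)) ^ 2 := by
        calc Real.exp (-α i / (2 * n)) ≤ Real.exp (-(2 * Real.log (1 + i))) :=
              Real.exp_le_exp.mpr hexp
          _ = 1 / (1 + (i:ℝ)) ^ 2 := by
              rw [Real.exp_neg, one_div]
              congr 1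
              rw [mul_comm, Real.exp_mul, Real.exp_log (by positivity)]
              norm_num
      have hi1R : (1:ℝ) ≤ i := by exact_mod_cast hi1
      have hmono : 1 / (1 + (i:ℝ)) ^ 2 ≤ 1 / (i:ℝ) ^ 2 := by
        apply one_div_le_one_div_of_le (by positivity)
        nlinarith
      rw [Real.norm_eq_abs, abs_of_pos (Real.exp_pos _), Real.norm_eq_abs,
        abs_of_pos (by positivity : (0:ℝ) < 1 / (i:ℝ) ^ 2), one_mul]
      exact hkey.trans hmono
    refine Summable.of_nonneg_of_le (fun i => by positivity) hbd (hsum.mul_left C')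
  · intro h n hn
    have hs := h n hn
    refine ⟨∑' i, ‖c i‖ * Real.exp (-α i / n), fun i => ?_⟩
    exact Summable.le_tsum hs i fun j _ => by positivity
end
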